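/- Let G be a finite connected graph and let M, H, H' be maximally intersecting matchings in G. Then every end-edge of a maximal M-H alternating path is an end-edge of a maximal H-H' alternating path with an even number of edges. -/

import Mathlib

variable {V : Type*}

/-- A matching of `G`, given as a set of edges: a set of edges of `G` that are
pairwise non-adjacent (no two distinct edges share a vertex). -/
def IsMatchingSet (G : SimpleGraph V) (M : Set (Sym2 V)) : Prop :=
  M ⊆ G.edgeSet ∧ ∀ e ∈ M, ∀ f ∈ M, e ≠ f → ∀ v : V, ¬(v ∈ e ∧ v ∈ f)

/-- ν(G): the maximum size of a matching of `G`. -/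
noncomputable def matchingNumber (G : SimpleGraph V) : ℕ :=
  sSup {n | ∃ M : Set (Sym2 V), IsMatchingSet G M ∧ M.ncard = n}

/-- λ(G): the maximum of |H| + |H'| over pairs (H, H') of disjoint matchings of `G`. -/
noncomputable def lambdaParam (G : SimpleGraph V) : ℕ :=
  sSup {n | ∃ H H' : Set (Sym2 V), IsMatchingSet G H ∧ IsMatchingSet G H' ∧
    Disjoint H H' ∧ H.ncard + H'.ncard = n}

/-- μ(G): the maximum of |H| over pairs (H, H') of disjoint matchings of `G` with
|H| + |H'| = λ(G). -/
noncomputable def muParam (G : SimpleGraph V) : ℕ :=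
  sSup {n | ∃ H H' : Set (Sym2 V), IsMatchingSet G H ∧ IsMatchingSet G H' ∧
    Disjoint H H' ∧ H.ncard + H'.ncard = lambdaParam G ∧ H.ncard = n}

/-- A list of edges alternately lies in `A ∖ B` and `B ∖ A`. -/
def AltList (A B : Set (Sym2 V)) (l : List (Sym2 V)) : Prop :=
  (∀ e ∈ l, (e ∈ A ∧ e ∉ B) ∨ (e ∈ B ∧ e ∉ A)) ∧
  List.Chain' (fun e f => ¬(e ∈ A ↔ f ∈ A)) l

/-- An `A`-`B` alternating path in `G`: a (nontrivial) path whose edges alternately lie in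
`A ∖ B` and `B ∖ A`. -/
def IsAltPath (G : SimpleGraph V) (A B : Set (Sym2 V)) {u v : V} (p : G.Walk u v) : Prop :=
  0 < p.length ∧ p.IsPath ∧ AltList A B p.edges

/-- A maximal `A`-`B` alternating path: an alternating path that cannot be extended to a
longer alternating path at either of its ends. -/
def IsMaxAltPath (G : SimpleGraph V) (A B : Set (Sym2 V)) {u v : V} (p : G.Walk u v) : Prop :=
  IsAltPath G A B p ∧
  (∀ w, ∀ h : G.Adj w u, ¬ IsAltPath G A B (SimpleGraph.Walk.cons h p)) ∧
  (∀ w, ∀ h : G.Adj w v, ¬ IsAltPath G A B (SimpleGraph.Walk.cons h p.reverse))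

/-- `M` is a maximum matching of `G`. -/
def IsMaxMatching (G : SimpleGraph V) (M : Set (Sym2 V)) : Prop :=
  IsMatchingSet G M ∧ ∀ M' : Set (Sym2 V), IsMatchingSet G M' → M'.ncard ≤ M.ncard

/-- `(H, H')` is a pair of disjoint matchings of `G` with `|H| + |H'| = λ(G)` and
`|H| = μ(G)`. -/
def IsLambdaMuPair (G : SimpleGraph V) (H H' : Set (Sym2 V)) : Prop :=
  IsMatchingSet G H ∧ IsMatchingSet G H' ∧ Disjoint H H' ∧
  H.ncard + H'.ncard = lambdaParam G ∧ H.ncard = muParam G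

/-- The matchings `M`, `H`, `H'` are maximally intersecting:
(i) `M` is a maximum matching; (ii) `(H, H') ∈ Λ(G)` with `|H| = μ(G)`;
(iii) `|M ∩ (H ∪ H')|` is maximum among all such triples;
(iv) `|M ∩ H|` is maximum among all such triples also satisfying (iii). -/
def MaxIntersecting (G : SimpleGraph V) (M H H' : Set (Sym2 V)) : Prop :=
  IsMaxMatching G M ∧ IsLambdaMuPair G H H' ∧
  (∀ M₂ H₂ H₂' : Set (Sym2 V), IsMaxMatching G M₂ → IsLambdaMuPair G H₂ H₂' →
    (M₂ ∩ (H₂ ∪ H₂')).ncard ≤ (M ∩ (H ∪ H')).ncard) ∧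
  (∀ M₂ H₂ H₂' : Set (Sym2 V), IsMaxMatching G M₂ → IsLambdaMuPair G H₂ H₂' →
    (M₂ ∩ (H₂ ∪ H₂')).ncard = (M ∩ (H ∪ H')).ncard → (M₂ ∩ H₂).ncard ≤ (M ∩ H).ncard)

/-!
Let `e` be the first edge of a maximal `M`-`H` alternating path `P` starting at `u`. Exchanging
`M` along an alternating path or cycle so that it stays maximum and gains edges of `H`, or
replacing an edge of `H'` by an edge of `M` outside `H ∪ H'` so that `(H, H')` stays in `Λ(G)`,
would contradict maximal intersection. Exchanges along `P`, closed up by an edge joining its ends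
when there is one, show `e ∈ M`, that `u` is not covered by `H`, and that `e ∈ H'`. The maximal
`H`-`H'` alternating path starting with `e` at `u` then ends with an edge of `H`, since otherwise
swapping `H` and `H'` along it would give a pair in `Λ(G)` whose first matching has `μ(G) + 1`
edges; hence it has even length.
-/

open SimpleGraph
open scoped symmDiff

section Matching

variable {G : SimpleGraph V} {A B C : Set (Sym2 V)}

theorem IsMatchingSet.eq_of_mem (hA : IsMatchingSet G A) {a b : Sym2 V} (ha : a ∈ A) (hb : b ∈ A)
    {x : V} (hxa : x ∈ a) (hxb : x ∈ b) : a = b :=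
  by_contra fun hne => hA.2 a ha b hb hne x ⟨hxa, hxb⟩

theorem IsMatchingSet.subset (hB : IsMatchingSet G B) (hAB : A ⊆ B) : IsMatchingSet G A :=
  ⟨hAB.trans hB.1, fun a ha b hb => hB.2 a (hAB ha) b (hAB hb)⟩

theorem IsMatchingSet.insert (hA : IsMatchingSet G A) {e : Sym2 V} (he : e ∈ G.edgeSet)
    (hfree : ∀ a ∈ A, ∀ x ∈ e, x ∉ a) : IsMatchingSet G (insert e A) := by
  refine ⟨Set.insert_subset he hA.1, ?_⟩
  rintro a (rfl | ha) b (rfl | hb) hne x ⟨hxa, hxb⟩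
  · exact hne rfl
  · exact hfree b hb x hxa hxb
  · exact hfree a ha x hxb hxa
  · exact hA.2 a ha b hb hne x ⟨hxa, hxb⟩

theorem IsMatchingSet.symmDiff (hA : IsMatchingSet G A) (hB : IsMatchingSet G B)
    (hCB : C \ A ⊆ B) (hcov : ∀ f ∈ C \ A, ∀ a ∈ A, ∀ x ∈ f, x ∈ a → a ∈ C) :
    IsMatchingSet G (A ∆ C) := by
  refine ⟨fun a ha => ?_, ?_⟩
  · rcases ha with ha | ha
    exacts [hA.1 ha.1, hB.1 (hCB ha)]
  rintro a ha b hb hne x ⟨hxa, hxb⟩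
  rcases ha with ha | ha <;> rcases hb with hb | hb
  · exact hA.2 a ha.1 b hb.1 hne x ⟨hxa, hxb⟩
  · exact ha.2 (hcov b hb a ha.1 x hxb hxa)
  · exact hb.2 (hcov a ha b hb.1 x hxa hxb)
  · exact hB.2 a (hCB ha) b (hCB hb) hne x ⟨hxa, hxb⟩

theorem ncard_symmDiff_add_ncard_inter {α : Type*} {s t : Set α} (hs : s.Finite := by toFinite_tac)
    (ht : t.Finite := by toFinite_tac) :
    (s ∆ t).ncard + (s ∩ t).ncard = s.ncard + (t \ s).ncard := by
  rw [Set.symmDiff_def, Set.ncard_union_eq disjoint_sdiff_sdiff hs.sdiff ht.sdiff,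
    ← Set.ncard_inter_add_ncard_sdiff_eq_ncard s t hs]
  omega

theorem Disjoint.symmDiff_symmDiff_of_subset_union {α : Type*} {s t c : Set α}
    (hst : Disjoint s t) (hc : c ⊆ s ∪ t) : Disjoint (s ∆ c) (t ∆ c) := by
  refine Set.disjoint_left.mpr fun x hs ht => ?_
  have hcx := @hc x
  have hstx := fun h : x ∈ s => Set.disjoint_left.mp hst h
  simp only [Set.mem_symmDiff, Set.mem_union] at hs ht hcx
  tauto

theorem symmDiff_union_symmDiff_of_subset_union {α : Type*} {s t c : Set α}
    (hst : Disjoint s t) (hc : c ⊆ s ∪ t) : s ∆ c ∪ t ∆ c = s ∪ t := by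
  ext x
  have hcx := @hc x
  have hstx := fun h : x ∈ s => Set.disjoint_left.mp hst h
  simp only [Set.mem_union, Set.mem_symmDiff] at hcx ⊢
  tauto

variable [Finite V]

theorem ncard_add_ncard_le_lambdaParam (hA : IsMatchingSet G A) (hB : IsMatchingSet G B)
    (hAB : Disjoint A B) : A.ncard + B.ncard ≤ lambdaParam G := by
  refine le_csSup ⟨2 * Nat.card (Sym2 V), ?_⟩ ⟨A, B, hA, hB, hAB, rfl⟩
  rintro n ⟨A', B', -, -, -, rfl⟩
  have := Set.ncard_le_card A'
  have := Set.ncard_le_card B'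
  omega

theorem ncard_le_muParam (hA : IsMatchingSet G A) (hB : IsMatchingSet G B) (hAB : Disjoint A B)
    (hsum : A.ncard + B.ncard = lambdaParam G) : A.ncard ≤ muParam G := by
  refine le_csSup ⟨Nat.card (Sym2 V), ?_⟩ ⟨A, B, hA, hB, hAB, hsum, rfl⟩
  rintro n ⟨A', -, -, -, -, -, rfl⟩
  exact Set.ncard_le_card A'

end Matching

theorem List.countP_add_one_of_isChain {α : Type*} {P : α → Prop} [DecidablePred P] {l : List α}
    (hl : l.IsChain fun a b => ¬(P a ↔ P b)) {a b : α} (ha : l.head? = some a)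
    (hb : l.getLast? = some b) :
    l.countP (P ·) + 1 = l.countP (¬P ·) + (if P a then 1 else 0) + (if P b then 1 else 0) := by
  induction l generalizing a with
  | nil => simp at ha
  | cons x t ih =>
    obtain rfl : x = a := by simpa using ha
    cases t with
    | nil =>
      obtain rfl : x = b := by simpa using hb
      by_cases hx : P x <;> simp [hx]
    | cons y t =>
      rw [List.isChain_cons_cons] at hl
      have := ih hl.2 rfl (by simpa using hb)
      by_cases hx : P x <;> by_cases hy : P y <;> simp [hx, hy] at hl this ⊢ <;> omega

theorem List.Nodup.ncard_inter_setOf_mem {α : Type*} {l : List α} (hl : l.Nodup) (S : Set α)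
    [DecidablePred (· ∈ S)] : (S ∩ {x | x ∈ l}).ncard = l.countP (· ∈ S) := by
  classical
  have : S ∩ {x | x ∈ l} = ↑(l.filter (· ∈ S)).toFinset := by
    ext x; simp [and_comm]
  rw [this, Set.ncard_coe_finset, List.toFinset_card_of_nodup (hl.filter _),
    List.countP_eq_length_filter]

namespace SimpleGraph.Walk

variable {G : SimpleGraph V} {u v : V}

theorem start_mem_of_edges_head? {p : G.Walk u v} {e : Sym2 V} (he : p.edges.head? = some e) :
    u ∈ e := by
  cases p with
  | nil => simp at he
  | cons h q =>
    obtain rfl : s(u, _) = e := by simpa using he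
    exact Sym2.mem_mk_left _ _

theorem end_mem_of_edges_getLast? {p : G.Walk u v} {e : Sym2 V} (he : p.edges.getLast? = some e) :
    v ∈ e :=
  start_mem_of_edges_head? (p := p.reverse) (by simpa [edges_reverse, List.head?_reverse] using he)

theorem IsPath.eq_of_edges_head? {p : G.Walk u v} (hp : p.IsPath) {e f : Sym2 V}
    (he : p.edges.head? = some e) (hf : f ∈ p.edges) (huf : u ∈ f) : f = e := by
  cases p with
  | nil => simp at he
  | cons h q =>
    simp only [edges_cons, List.head?_cons, Option.some.injEq, List.mem_cons] at he hf
    subst he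
    refine hf.resolve_right fun hfq => ?_
    obtain ⟨z, rfl⟩ := Sym2.mem_iff_exists.mp huf
    exact ((cons_isPath_iff _ _).mp hp).2 (fst_mem_support_of_mem_edges q hfq)

theorem exists_edges_eq_append_cons_cons (p : G.Walk u v) {x : V} (hx : x ∈ p.support)
    (hxu : x ≠ u) (hxv : x ≠ v) :
    ∃ l₁ l₂ f₁ f₂, p.edges = l₁ ++ f₁ :: f₂ :: l₂ ∧ x ∈ f₁ ∧ x ∈ f₂ := by
  induction p with
  | nil => simp_all
  | @cons u b v h q ih =>
    have hxq : x ∈ q.support := by simpa [hxu] using hx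
    by_cases hxb : x = b
    · subst hxb
      cases q with
      | nil => exact absurd rfl hxv
      | cons h' q' => exact ⟨[], _, _, _, rfl, Sym2.mem_mk_right _ _, Sym2.mem_mk_left _ _⟩
    · obtain ⟨l₁, l₂, f₁, f₂, hq, hx₁, hx₂⟩ := ih hxq hxb hxv
      exact ⟨s(u, b) :: l₁, l₂, f₁, f₂, by simp [hq], hx₁, hx₂⟩

end SimpleGraph.Walk

section Alternating

open Walk

variable {G : SimpleGraph V} {A B : Set (Sym2 V)} {u v : V}

theorem AltList.symm {l : List (Sym2 V)} (h : AltList A B l) : AltList B A l := by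
  refine ⟨fun e he => (h.1 e he).symm, h.2.imp_of_mem_imp fun e f he hf hef => ?_⟩
  rcases h.1 e he with he | he <;> rcases h.1 f hf with hf | hf <;> tauto

theorem AltList.nil : AltList A B [] :=
  ⟨by simp, List.isChain_nil⟩

theorem AltList.cons {l : List (Sym2 V)} (h : AltList A B l) {a : Sym2 V}
    (ha : (a ∈ A ∧ a ∉ B) ∨ (a ∈ B ∧ a ∉ A)) (hal : ∀ e ∈ l.head?, ¬(a ∈ A ↔ e ∈ A)) :
    AltList A B (a :: l) :=
  ⟨List.forall_mem_cons.mpr ⟨ha, h.1⟩, List.isChain_cons.mpr ⟨hal, h.2⟩⟩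

theorem AltList.reverse {l : List (Sym2 V)} (h : AltList A B l) : AltList A B l.reverse :=
  ⟨fun e he => h.1 e (List.mem_reverse.mp he),
    List.isChain_reverse.mpr (h.2.imp fun _ _ hab h' => hab h'.symm)⟩

theorem AltList.mem_right_of_notMem_left {l : List (Sym2 V)} (h : AltList A B l) {e : Sym2 V}
    (he : e ∈ l) (heA : e ∉ A) : e ∈ B :=
  ((h.1 e he).resolve_left fun h' => heA h'.1).1

theorem AltList.notMem_right_of_mem_left {l : List (Sym2 V)} (h : AltList A B l) {e : Sym2 V}
    (he : e ∈ l) (heA : e ∈ A) : e ∉ B :=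
  ((h.1 e he).resolve_right fun h' => h'.2 heA).2

theorem AltList.mem_edges_of_mem_support (hA : IsMatchingSet G A) (hB : IsMatchingSet G B)
    {p : G.Walk u v} (hp : AltList A B p.edges) {x : V} (hx : x ∈ p.support) (hxu : x ≠ u)
    (hxv : x ≠ v) {a : Sym2 V} (ha : a ∈ A ∪ B) (hxa : x ∈ a) : a ∈ p.edges := by
  obtain ⟨l₁, l₂, f₁, f₂, hl, hx₁, hx₂⟩ := p.exists_edges_eq_append_cons_cons hx hxu hxv
  have hrel : ¬(f₁ ∈ A ↔ f₂ ∈ A) := by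
    have := hp.2
    rw [hl] at this
    exact (List.isChain_append_cons_cons.mp this).2.1
  obtain ⟨f, hf, hxf, hfa⟩ : ∃ f ∈ p.edges, x ∈ f ∧ (f ∈ A ↔ a ∈ A) := by
    by_cases h : f₁ ∈ A ↔ a ∈ A
    · exact ⟨f₁, by simp [hl], hx₁, h⟩
    · exact ⟨f₂, by simp [hl], hx₂, by tauto⟩
  by_cases haA : a ∈ A
  · exact hA.eq_of_mem haA (hfa.mpr haA) hxa hxf ▸ hf
  · have hfB := hp.mem_right_of_notMem_left hf (hfa.not.mpr haA)
    exact hB.eq_of_mem (ha.resolve_left haA) hfB hxa hxf ▸ hf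

theorem IsAltPath.symm {p : G.Walk u v} (hp : IsAltPath G A B p) : IsAltPath G B A p :=
  ⟨hp.1, hp.2.1, hp.2.2.symm⟩

theorem IsAltPath.reverse {p : G.Walk u v} (hp : IsAltPath G A B p) : IsAltPath G A B p.reverse :=
  ⟨by simpa using hp.1, hp.2.1.reverse, by simpa [edges_reverse] using hp.2.2.reverse⟩

theorem IsAltPath.exists_edges_head? {p : G.Walk u v} (hp : IsAltPath G A B p) :
    ∃ e, p.edges.head? = some e :=
  ⟨_, List.head?_eq_some_head (List.length_pos_iff.mp (by simpa using hp.1))⟩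

theorem IsAltPath.exists_edges_getLast? {p : G.Walk u v} (hp : IsAltPath G A B p) :
    ∃ e, p.edges.getLast? = some e :=
  ⟨_, List.getLast?_eq_some_getLast (List.length_pos_iff.mp (by simpa using hp.1))⟩

theorem IsMaxAltPath.reverse {p : G.Walk u v} (hp : IsMaxAltPath G A B p) :
    IsMaxAltPath G A B p.reverse :=
  ⟨hp.1.reverse, hp.2.2, fun w h => by simpa using hp.2.1 w h⟩

theorem IsMaxAltPath.mem_edges_or_mem_of_mem_start (hA : IsMatchingSet G A)
    (hB : IsMatchingSet G B) {p : G.Walk u v} (hp : IsMaxAltPath G A B p) {a : Sym2 V}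
    (ha : a ∈ A ∪ B) (hua : u ∈ a) : a ∈ p.edges ∨ v ∈ a := by
  obtain ⟨e, he⟩ := hp.1.exists_edges_head?
  have heP := List.mem_of_mem_head? he
  have hue := start_mem_of_edges_head? he
  have halt := hp.1.2.2
  by_cases hsame : a ∈ A ↔ e ∈ A
  · left
    by_cases heA : e ∈ A
    · exact hA.eq_of_mem (hsame.mpr heA) heA hua hue ▸ heP
    · exact hB.eq_of_mem (ha.resolve_left (hsame.not.mpr heA))
        (halt.mem_right_of_notMem_left heP heA) hua hue ▸ heP
  have ha' : (a ∈ A ∧ a ∉ B) ∨ (a ∈ B ∧ a ∉ A) := by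
    by_cases haA : a ∈ A
    · refine Or.inl ⟨haA, fun haB => hsame ?_⟩
      have heB := halt.mem_right_of_notMem_left heP (by tauto)
      rw [hB.eq_of_mem haB heB hua hue]
    · exact Or.inr ⟨ha.resolve_left haA, haA⟩
  obtain ⟨w, rfl⟩ := Sym2.mem_iff_exists.mp hua
  have hadj : G.Adj w u := (ha.elim (fun h => hA.1 h) (fun h => hB.1 h)).symm
  have halt' : AltList A B (s(w, u) :: p.edges) := halt.cons (Sym2.eq_swap (a := w) ▸ ha')
    fun f hf => by
      obtain rfl : e = f := by simpa [he] using hf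
      rwa [Sym2.eq_swap]
  have hw : w ∈ p.support := by
    by_contra hw
    exact hp.2.1 w hadj ⟨by simp, (cons_isPath_iff _ _).mpr ⟨hp.1.2.1, hw⟩, by rwa [edges_cons]⟩
  by_cases hwv : w = v
  · exact Or.inr (hwv ▸ Sym2.mem_mk_right u w)
  · exact Or.inl (halt.mem_edges_of_mem_support hA hB hw hadj.ne hwv ha (Sym2.mem_mk_right u w))

theorem IsMaxAltPath.mem_edges_of_mem_end (hA : IsMatchingSet G A) (hB : IsMatchingSet G B)
    {p : G.Walk u v} (hp : IsMaxAltPath G A B p) (hu : ∀ a ∈ A ∪ B, u ∈ a → a ∈ p.edges)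
    {a : Sym2 V} (ha : a ∈ A ∪ B) (hva : v ∈ a) : a ∈ p.edges := by
  rcases hp.reverse.mem_edges_or_mem_of_mem_start hA hB ha hva with h | h
  · simpa using h
  · exact hu a ha h

theorem exists_isMaxAltPath_edges_head? [Finite V] {x : V} (hxA : ∀ a ∈ A, x ∉ a) {g : Sym2 V}
    (hgE : g ∈ G.edgeSet) (hgB : g ∈ B) (hxg : x ∈ g) :
    ∃ (t : V) (r : G.Walk x t), IsMaxAltPath G A B r ∧ r.edges.head? = some g := by
  have := Fintype.ofFinite V
  have hgA : g ∉ A := fun h => hxA g h hxg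
  obtain ⟨y, rfl⟩ := Sym2.mem_iff_exists.mp hxg
  have hadj : G.Adj x y := hgE
  let S : Set ℕ := {n | ∃ (t : V) (r : G.Walk x t), IsAltPath G A B r ∧
    r.edges.head? = some s(x, y) ∧ r.length = n}
  have hS : 1 ∈ S := by
    refine ⟨y, cons hadj nil, ⟨by simp, (cons_isPath_iff _ _).mpr ⟨.nil, by simpa using hadj.ne⟩,
      ?_⟩, rfl, rfl⟩
    rw [edges_cons, edges_nil]
    exact AltList.nil.cons (Or.inr ⟨hgB, hgA⟩) (by simp)
  have hbdd : BddAbove S := ⟨Fintype.card V, by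
    rintro _ ⟨t, r, hr, -, rfl⟩
    exact hr.2.1.length_lt.le⟩
  obtain ⟨t, r, hr, hrg, hlen⟩ := Nat.sSup_mem ⟨1, hS⟩ hbdd
  refine ⟨t, r, ⟨hr, fun w h hw => ?_, fun w h hw => ?_⟩, hrg⟩
  · have hchain : List.IsChain _ (s(w, x) :: r.edges) := hw.2.2.2
    have := (List.isChain_cons.mp hchain).1 _ hrg
    exact hxA _ (by tauto) (Sym2.mem_mk_right w x)
  · have hlong : (cons h r.reverse).reverse.length ∈ S :=
      ⟨w, _, hw.reverse, by simp [hrg], rfl⟩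
    have := le_csSup hbdd hlong
    simp only [length_reverse, length_cons] at this
    omega

end Alternating

section Exchange

open Walk

variable {G : SimpleGraph V} {A B : Set (Sym2 V)} {u v : V}

open Classical in
theorem IsAltPath.ncard_inter_add_one {p : G.Walk u v} (hp : IsAltPath G A B p) {e f : Sym2 V}
    (he : p.edges.head? = some e) (hf : p.edges.getLast? = some f) :
    (A ∩ p.edgeSet).ncard + 1 =
      (p.edgeSet \ A).ncard + (if e ∈ A then 1 else 0) + (if f ∈ A then 1 else 0) := by
  have hnd := hp.2.1.edges_nodup
  rw [Set.sdiff_eq_compl_inter, Walk.edgeSet, hnd.ncard_inter_setOf_mem, hnd.ncard_inter_setOf_mem]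
  exact List.countP_add_one_of_isChain hp.2.2.2 he hf

theorem IsAltPath.ncard_inter_insert_eq {p : G.Walk u v} (hp : IsAltPath G A B p)
    {e f φ : Sym2 V} (he : p.edges.head? = some e) (hf : p.edges.getLast? = some f)
    (hφp : φ ∉ p.edges) (hφe : ¬(φ ∈ A ↔ e ∈ A)) (hφf : ¬(φ ∈ A ↔ f ∈ A)) :
    (A ∩ insert φ p.edgeSet).ncard = (insert φ p.edgeSet \ A).ncard := by
  have hcount := hp.ncard_inter_add_one he hf
  have hfin : p.edgeSet.Finite := p.edges.finite_toSet
  by_cases hφA : φ ∈ A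
  · rw [Set.inter_insert_of_mem hφA, Set.insert_sdiff_of_mem _ hφA,
      Set.ncard_insert_of_notMem (fun h : φ ∈ A ∩ p.edgeSet => hφp h.2) (hfin.inter_of_right A)]
    rw [if_neg (by tauto), if_neg (by tauto)] at hcount
    omega
  · rw [Set.inter_insert_of_notMem hφA, Set.insert_sdiff_of_notMem _ hφA,
      Set.ncard_insert_of_notMem (fun h : φ ∈ p.edgeSet \ A => hφp h.1) hfin.sdiff]
    rw [if_pos (by tauto), if_pos (by tauto)] at hcount
    omega

theorem IsAltPath.start_ne_end {p : G.Walk u v} (hp : IsAltPath G A B p) : u ≠ v :=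
  fun h => hp.1.ne' (hp.2.1.nil_iff_eq.mpr h).length_eq_zero

theorem IsAltPath.isMatchingSet_symmDiff (hA : IsMatchingSet G A) (hB : IsMatchingSet G B)
    {p : G.Walk u v} (hp : IsAltPath G A B p) {C : Set (Sym2 V)} (hpC : p.edgeSet ⊆ C)
    (hCB : C \ A ⊆ B) (hCp : ∀ f ∈ C, ∀ x ∈ f, x ∈ p.support)
    (hends : ∀ a ∈ A, (u ∈ a ∨ v ∈ a) → a ∈ C) : IsMatchingSet G (A ∆ C) := by
  refine hA.symmDiff hB hCB fun f hf a ha x hxf hxa => ?_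
  by_cases hxu : x = u
  · exact hends a ha (Or.inl (hxu ▸ hxa))
  by_cases hxv : x = v
  · exact hends a ha (Or.inr (hxv ▸ hxa))
  exact hpC (hp.2.2.mem_edges_of_mem_support hA hB (hCp f hf.1 x hxf) hxu hxv (Or.inl ha) hxa)

theorem IsAltPath.isMatchingSet_symmDiff_edgeSet (hA : IsMatchingSet G A)
    (hB : IsMatchingSet G B) {p : G.Walk u v} (hp : IsAltPath G A B p)
    (hends : ∀ a ∈ A, (u ∈ a ∨ v ∈ a) → a ∈ p.edges) : IsMatchingSet G (A ∆ p.edgeSet) :=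
  hp.isMatchingSet_symmDiff hA hB subset_rfl
    (fun _ hf => hp.2.2.mem_right_of_notMem_left hf.1 hf.2)
    (fun _ hf _ hx => mem_support_of_mem_edges hf hx) hends

theorem IsLambdaMuPair.not_isMatchingSet_insert [Finite V] {H H' : Set (Sym2 V)}
    (hpair : IsLambdaMuPair G H H') {e : Sym2 V} (he : e ∉ H ∪ H') :
    ¬IsMatchingSet G (insert e H') := by
  intro hm
  have := ncard_add_ncard_le_lambdaParam hpair.1 hm
    (Set.disjoint_insert_right.mpr ⟨fun h => he (Or.inl h), hpair.2.2.1⟩)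
  rw [Set.ncard_insert_of_notMem fun h => he (Or.inr h)] at this
  have := hpair.2.2.2.1
  omega

namespace MaxIntersecting

variable [Finite V] {M H H' : Set (Sym2 V)}

/-- Exchanging `M ∩ C` for `C \ M ⊆ H` would give a maximum matching meeting `H ∪ H'` at least
as much as `M` does and meeting `H` strictly more. -/
theorem not_isMatchingSet_symmDiff (hmax : MaxIntersecting G M H H') {C : Set (Sym2 V)}
    (hCH : C \ M ⊆ H) (hMC : Disjoint (M ∩ C) H) (hne : (C \ M).Nonempty)
    (hcard : (M ∩ C).ncard ≤ (C \ M).ncard) : ¬IsMatchingSet G (M ∆ C) := by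
  intro hM₂
  obtain ⟨⟨-, hMmax⟩, hpair, hiii, hiv⟩ := hmax
  have hsize := ncard_symmDiff_add_ncard_inter (s := M) (t := C)
  have hM₂max : IsMaxMatching G (M ∆ C) :=
    ⟨hM₂, fun M' hM' => (hMmax M' hM').trans (by omega)⟩
  have hUnew : ((M ∩ (H ∪ H')) \ C) ∪ (C \ M) ⊆ M ∆ C ∩ (H ∪ H') := by
    rintro x (⟨⟨hxM, hxU⟩, hxC⟩ | hx)
    exacts [⟨Or.inl ⟨hxM, hxC⟩, hxU⟩, ⟨Or.inr hx, Or.inl (hCH hx)⟩]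
  have hHnew : (M ∩ H) ∪ (C \ M) ⊆ M ∆ C ∩ H := by
    rintro x (⟨hxM, hxH⟩ | hx)
    exacts [⟨Or.inl ⟨hxM, fun hxC => hMC.notMem_of_mem_left ⟨hxM, hxC⟩ hxH⟩, hxH⟩,
      ⟨Or.inr hx, hCH hx⟩]
  have h₁ := Set.ncard_le_ncard hUnew
  have h₂ := Set.ncard_le_ncard hHnew
  rw [Set.ncard_union_eq (Set.disjoint_sdiff_left.mono_right Set.sdiff_subset)] at h₁
  rw [Set.ncard_union_eq (Set.disjoint_left.mpr fun x hx hx' => hx'.2 hx.1)] at h₂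
  have h₃ := Set.ncard_inter_add_ncard_sdiff_eq_ncard (M ∩ (H ∪ H')) C
  have h₄ := Set.ncard_le_ncard
    (Set.inter_subset_inter_left C Set.inter_subset_left : M ∩ (H ∪ H') ∩ C ⊆ M ∩ C)
  have hpos := hne.ncard_pos
  have := hiv _ _ _ hM₂max hpair (le_antisymm (hiii _ _ _ hM₂max hpair) (by omega))
  omega

theorem not_isMatchingSet_insert_sdiff (hmax : MaxIntersecting G M H H') {H₂ H₂' : Set (Sym2 V)}
    (hpair : IsLambdaMuPair G H₂ H₂') (hU : H₂ ∪ H₂' = H ∪ H') {e d : Sym2 V} (heM : e ∈ M)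
    (heU : e ∉ H ∪ H') (hd : d ∈ H₂') (hdM : d ∉ M) :
    ¬IsMatchingSet G (insert e (H₂' \ {d})) := by
  intro hm
  obtain ⟨hH₂, -, hdisj, hsum, hmu⟩ := hpair
  rw [← hU] at heU
  have hpair₃ : IsLambdaMuPair G H₂ (insert e (H₂' \ {d})) := by
    refine ⟨hH₂, hm, ?_, ?_, hmu⟩
    · exact Set.disjoint_insert_right.mpr
        ⟨fun h => heU (Or.inl h), hdisj.mono_right Set.sdiff_subset⟩
    · rw [Set.ncard_insert_of_notMem fun h => heU (Or.inr h.1),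
        Set.ncard_sdiff_singleton_add_one hd]
      exact hsum
  have hlt : M ∩ (H ∪ H') ⊂ M ∩ (H₂ ∪ insert e (H₂' \ {d})) := by
    rw [← hU]
    refine ⟨fun x ⟨hxM, hx⟩ => ⟨hxM, ?_⟩, fun h => heU (h ⟨heM, Or.inr (Set.mem_insert _ _)⟩).2⟩
    rcases hx with hx | hx
    · exact Or.inl hx
    · exact Or.inr (Or.inr ⟨hx, fun hxd => hdM (hxd ▸ hxM)⟩)
  exact (Set.ncard_lt_ncard hlt).not_ge (hmax.2.2.1 M _ _ hmax.1 hpair₃)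

theorem exists_mem_of_notMem_union (hmax : MaxIntersecting G M H H') {H₂ H₂' : Set (Sym2 V)}
    (hpair : IsLambdaMuPair G H₂ H₂') (hU : H₂ ∪ H₂' = H ∪ H') {e : Sym2 V} (heM : e ∈ M)
    (heU : e ∉ H ∪ H') {u : V} (hue : u ∈ e) : ∃ a ∈ H₂', u ∈ a := by
  by_contra! hu
  obtain ⟨y, rfl⟩ := Sym2.mem_iff_exists.mp hue
  have heE : s(u, y) ∈ G.edgeSet := hmax.1.1.1 heM
  by_cases hy : ∃ d ∈ H₂', y ∈ d
  · obtain ⟨d, hd, hyd⟩ := hy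
    have hdM : d ∉ M := fun hdM => heU <| hU ▸
      Or.inr (hmax.1.1.eq_of_mem hdM heM hyd (Sym2.mem_mk_right u y) ▸ hd)
    refine hmax.not_isMatchingSet_insert_sdiff hpair hU heM heU hd hdM
      ((hpair.2.1.subset Set.sdiff_subset).insert heE ?_)
    rintro a ⟨ha, had⟩ x hx hxa
    rcases Sym2.mem_iff.mp hx with rfl | rfl
    · exact hu a ha hxa
    · exact had (hpair.2.1.eq_of_mem ha hd hxa hyd)
  · refine hpair.not_isMatchingSet_insert (hU ▸ heU) (hpair.2.1.insert heE ?_)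
    rintro a ha x hx hxa
    rcases Sym2.mem_iff.mp hx with rfl | rfl
    exacts [hu a ha hxa, hy ⟨a, ha, hxa⟩]

end MaxIntersecting

end Exchange

section Swap

open Walk

variable {G : SimpleGraph V} {H H' : Set (Sym2 V)} {u t : V}

theorem IsMaxAltPath.mem_edges_of_mem_ends (hH : IsMatchingSet G H) (hH' : IsMatchingSet G H')
    {r : G.Walk u t} (hr : IsMaxAltPath G H H' r) (hu : ∀ a ∈ H, u ∉ a) :
    ∀ a ∈ H ∪ H', (u ∈ a ∨ t ∈ a) → a ∈ r.edges := by
  obtain ⟨g, hg⟩ := hr.1.exists_edges_head?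
  have hgP := List.mem_of_mem_head? hg
  have hug := start_mem_of_edges_head? hg
  have hstart : ∀ a ∈ H ∪ H', u ∈ a → a ∈ r.edges := by
    rintro a (ha | ha) hua
    · exact absurd hua (hu a ha)
    · exact hH'.eq_of_mem ha (hr.1.2.2.mem_right_of_notMem_left hgP (hu g · hug)) hua hug ▸ hgP
  rintro a ha (hua | hta)
  exacts [hstart a ha hua, hr.mem_edges_of_mem_end hH hH' hstart ha hta]

theorem IsLambdaMuPair.even_length_and_isLambdaMuPair_symmDiff [Finite V]
    (hpair : IsLambdaMuPair G H H') {r : G.Walk u t} (hr : IsMaxAltPath G H H' r)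
    (hu : ∀ a ∈ H, u ∉ a) :
    Even r.length ∧ IsLambdaMuPair G (H ∆ r.edgeSet) (H' ∆ r.edgeSet) := by
  obtain ⟨hH, hH', hd, hsum, hmu⟩ := hpair
  have hends := hr.mem_edges_of_mem_ends hH hH' hu
  have hm := hr.1.isMatchingSet_symmDiff_edgeSet hH hH' fun a ha => hends a (Or.inl ha)
  have hm' := hr.1.symm.isMatchingSet_symmDiff_edgeSet hH' hH fun a ha => hends a (Or.inr ha)
  have hcls : ∀ x ∈ r.edgeSet, (x ∈ H ∧ x ∉ H') ∨ (x ∈ H' ∧ x ∉ H) := hr.1.2.2.1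
  have hCH : r.edgeSet \ H = H' ∩ r.edgeSet := by
    ext x; have := hcls x; simp only [Set.mem_sdiff, Set.mem_inter_iff]; tauto
  have hCH' : r.edgeSet \ H' = H ∩ r.edgeSet := by
    ext x; have := hcls x; simp only [Set.mem_sdiff, Set.mem_inter_iff]; tauto
  have hdisj := hd.symmDiff_symmDiff_of_subset_union fun x hx => (hcls x hx).imp And.left And.left
  obtain ⟨g, hg⟩ := hr.1.exists_edges_head?
  obtain ⟨f, hf⟩ := hr.1.exists_edges_getLast?
  have hcount := hr.1.ncard_inter_add_one hg hf
  rw [if_neg (hu g · (start_mem_of_edges_head? hg))] at hcount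
  have h₁ := ncard_symmDiff_add_ncard_inter (s := H) (t := r.edgeSet)
  have h₂ := ncard_symmDiff_add_ncard_inter (s := H') (t := r.edgeSet)
  rw [hCH] at h₁ hcount
  rw [hCH'] at h₂
  have hle := ncard_le_muParam hm hm' hdisj (by omega)
  have hlen : r.edgeSet.ncard = r.length := by
    classical
    rw [← coe_edges_toFinset, Set.ncard_coe_finset,
      List.toFinset_card_of_nodup hr.1.2.1.edges_nodup, length_edges]
  have hsplit := Set.ncard_inter_add_ncard_sdiff_eq_ncard r.edgeSet H
  rw [Set.inter_comm, hCH] at hsplit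
  split_ifs at hcount
  · exact ⟨⟨(H ∩ r.edgeSet).ncard, by omega⟩, hm, hm', hdisj, by omega, by omega⟩
  · omega

end Swap

section Main

open Walk

variable [Finite V] {G : SimpleGraph V} {M H H' : Set (Sym2 V)} {u v : V}

namespace MaxIntersecting

theorem false_of_isAltPath (hmax : MaxIntersecting G M H H') {p : G.Walk u v}
    (hp : IsAltPath G M H p) {e : Sym2 V} (he : p.edges.head? = some e) (heM : e ∉ M)
    (hends : ∀ a ∈ M, (u ∈ a ∨ v ∈ a) → a ∈ p.edges) : False := by
  obtain ⟨f, hf⟩ := hp.exists_edges_getLast?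
  have hcount := hp.ncard_inter_add_one he hf
  rw [if_neg heM] at hcount
  exact hmax.not_isMatchingSet_symmDiff (C := p.edgeSet)
    (fun g hg => hp.2.2.mem_right_of_notMem_left hg.1 hg.2)
    (Set.disjoint_left.mpr fun g hg => hp.2.2.notMem_right_of_mem_left hg.2 hg.1)
    ⟨e, List.mem_of_mem_head? he, heM⟩ (by split_ifs at hcount <;> omega)
    (hp.isMatchingSet_symmDiff_edgeSet hmax.1.1 hmax.2.1.1 hends)

/-- The closing edge `φ` turns `p` into an even alternating cycle. -/
theorem false_of_isAltPath_of_mem_symmDiff (hmax : MaxIntersecting G M H H') {p : G.Walk u v}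
    (hp : IsAltPath G M H p) {e f φ : Sym2 V} (he : p.edges.head? = some e)
    (hf : p.edges.getLast? = some f) (hφ : φ ∈ M ∆ H) (hφp : φ ∉ p.edges) (huφ : u ∈ φ)
    (hvφ : v ∈ φ) (hφe : ¬(φ ∈ M ↔ e ∈ M)) (hφf : ¬(φ ∈ M ↔ f ∈ M)) : False := by
  obtain rfl : φ = s(u, v) := (Sym2.mem_and_mem_iff hp.start_ne_end).mp ⟨huφ, hvφ⟩
  have heP := List.mem_of_mem_head? he
  have hfP := List.mem_of_mem_getLast? hf
  have hCH : insert s(u, v) p.edgeSet \ M ⊆ H := by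
    rintro g ⟨rfl | hg, hgM⟩
    exacts [(hφ.resolve_left fun h => hgM h.1).1, hp.2.2.mem_right_of_notMem_left hg hgM]
  have hends : ∀ a ∈ M, (u ∈ a ∨ v ∈ a) → a ∈ insert s(u, v) p.edgeSet := by
    rintro a ha (hua | hva)
    · by_cases heM : e ∈ M
      · exact Or.inr (hmax.1.1.eq_of_mem ha heM hua (start_mem_of_edges_head? he) ▸ heP)
      · exact Or.inl (hmax.1.1.eq_of_mem ha (by tauto) hua huφ)
    · by_cases hfM : f ∈ M
      · exact Or.inr (hmax.1.1.eq_of_mem ha hfM hva (end_mem_of_edges_getLast? hf) ▸ hfP)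
      · exact Or.inl (hmax.1.1.eq_of_mem ha (by tauto) hva hvφ)
  have hM₂ := hp.isMatchingSet_symmDiff hmax.1.1 hmax.2.1.1 (Set.subset_insert _ _) hCH
    (by rintro g (rfl | hg) x hx
        · rcases Sym2.mem_iff.mp hx with rfl | rfl
          exacts [p.start_mem_support, p.end_mem_support]
        · exact mem_support_of_mem_edges hg hx) hends
  refine hmax.not_isMatchingSet_symmDiff hCH (Set.disjoint_left.mpr ?_) ?_
    (hp.ncard_inter_insert_eq he hf hφp hφe hφf).le hM₂
  · rintro g ⟨hgM, rfl | hg⟩ hgH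
    exacts [(hφ.resolve_right fun h => h.2 hgM).2 hgH, hp.2.2.notMem_right_of_mem_left hg hgM hgH]
  · by_cases hφM : s(u, v) ∈ M
    · exact ⟨e, Or.inr heP, by tauto⟩
    · exact ⟨_, Set.mem_insert _ _, hφM⟩

theorem head_mem (hmax : MaxIntersecting G M H H') {p : G.Walk u v}
    (hp : IsMaxAltPath G M H p) {e : Sym2 V} (he : p.edges.head? = some e) : e ∈ M := by
  have hMm := hmax.1.1
  have hHm := hmax.2.1.1
  have heP := List.mem_of_mem_head? he
  have hue := start_mem_of_edges_head? he
  by_contra heM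
  have heH := hp.1.2.2.mem_right_of_notMem_left heP heM
  by_cases hu : ∃ m ∈ M, u ∈ m
  · obtain ⟨m, hmM, hum⟩ := hu
    have hmp : m ∉ p.edges := fun h => heM (hp.1.2.1.eq_of_edges_head? he h hum ▸ hmM)
    have hmH : m ∉ H := fun h => hmp (hHm.eq_of_mem h heH hum hue ▸ heP)
    have hvm := (hp.mem_edges_or_mem_of_mem_start hMm hHm (Or.inl hmM) hum).resolve_left hmp
    obtain ⟨f, hf⟩ := hp.1.exists_edges_getLast?
    have hfM : f ∉ M := fun hfM => hmp <|
      hMm.eq_of_mem hmM hfM hvm (end_mem_of_edges_getLast? hf) ▸ List.mem_of_mem_getLast? hf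
    exact hmax.false_of_isAltPath_of_mem_symmDiff hp.1 he hf (Or.inl ⟨hmM, hmH⟩) hmp hum hvm
      (by tauto) (by tauto)
  · have hstart : ∀ a ∈ M ∪ H, u ∈ a → a ∈ p.edges := by
      rintro a (ha | ha) hua
      exacts [absurd ⟨a, ha, hua⟩ hu, hHm.eq_of_mem ha heH hua hue ▸ heP]
    refine hmax.false_of_isAltPath hp.1 he heM fun a ha hends => ?_
    rcases hends with hua | hva
    exacts [hstart a (Or.inl ha) hua, hp.mem_edges_of_mem_end hMm hHm hstart (Or.inl ha) hva]

theorem start_notMem (hmax : MaxIntersecting G M H H') {p : G.Walk u v}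
    (hp : IsMaxAltPath G M H p) {e : Sym2 V} (he : p.edges.head? = some e) : ∀ a ∈ H, u ∉ a := by
  intro a haH hua
  have hMm := hmax.1.1
  have hHm := hmax.2.1.1
  have heP := List.mem_of_mem_head? he
  have heM := hmax.head_mem hp he
  have hap : a ∉ p.edges := fun h =>
    hp.1.2.2.notMem_right_of_mem_left heP heM (hp.1.2.1.eq_of_edges_head? he h hua ▸ haH)
  have haM : a ∉ M := fun h => hap (hMm.eq_of_mem h heM hua (start_mem_of_edges_head? he) ▸ heP)
  have hva := (hp.mem_edges_or_mem_of_mem_start hMm hHm (Or.inr haH) hua).resolve_left hap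
  obtain ⟨f, hf⟩ := hp.1.exists_edges_getLast?
  have hfP := List.mem_of_mem_getLast? hf
  have hfM : f ∈ M := by_contra fun hfM => hap <|
    hHm.eq_of_mem haH (hp.1.2.2.mem_right_of_notMem_left hfP hfM) hva
      (end_mem_of_edges_getLast? hf) ▸ hfP
  exact hmax.false_of_isAltPath_of_mem_symmDiff hp.1 he hf (Or.inr ⟨haH, haM⟩) hap hua hva
    (by tauto) (by tauto)

theorem head_mem_right (hmax : MaxIntersecting G M H H') {p : G.Walk u v}
    (hp : IsMaxAltPath G M H p) {e : Sym2 V} (he : p.edges.head? = some e) : e ∈ H' := by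
  by_contra heH'
  have hue := start_mem_of_edges_head? he
  have hu := hmax.start_notMem hp he
  have heM := hmax.head_mem hp he
  have heU : e ∉ H ∪ H' := fun h =>
    h.elim (hp.1.2.2.notMem_right_of_mem_left (List.mem_of_mem_head? he) heM) heH'
  obtain ⟨-, hH'm, hd, -⟩ := hmax.2.1
  by_cases hg : ∃ g ∈ H', u ∈ g
  · obtain ⟨g, hgH', hug⟩ := hg
    obtain ⟨t, r, hr, hrg⟩ := exists_isMaxAltPath_edges_head? hu (hH'm.1 hgH') hgH' hug
    have hrU : r.edgeSet ⊆ H ∪ H' := fun x hx => (hr.1.2.2.1 x hx).imp And.left And.left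
    obtain ⟨a, ha, hua⟩ := hmax.exists_mem_of_notMem_union
      (hmax.2.1.even_length_and_isLambdaMuPair_symmDiff hr hu).2
      (symmDiff_union_symmDiff_of_subset_union hd hrU) heM heU hue
    rcases ha with ⟨haH', har⟩ | ⟨har, haH'⟩
    · exact har (hH'm.eq_of_mem haH' hgH' hua hug ▸ List.mem_of_mem_head? hrg)
    · exact hu a ((hrU har).resolve_right haH') hua
  · obtain ⟨a, ha, hua⟩ := hmax.exists_mem_of_notMem_union hmax.2.1 rfl heM heU hue
    exact hg ⟨a, ha, hua⟩

theorem exists_even_isMaxAltPath_of_head (hmax : MaxIntersecting G M H H') {p : G.Walk u v}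
    (hp : IsMaxAltPath G M H p) {e : Sym2 V} (he : p.edges.head? = some e) :
    ∃ (a b : V) (q : G.Walk a b), IsMaxAltPath G H H' q ∧ Even q.length ∧
      q.edges.head? = some e := by
  have hu := hmax.start_notMem hp he
  obtain ⟨t, r, hr, hre⟩ := exists_isMaxAltPath_edges_head? hu
    (hmax.1.1.1 (hmax.head_mem hp he)) (hmax.head_mem_right hp he) (start_mem_of_edges_head? he)
  exact ⟨u, t, r, hr, (hmax.2.1.even_length_and_isLambdaMuPair_symmDiff hr hu).1, hre⟩

end MaxIntersecting

end Main

theorem stmt_14_general [Fintype V] (G : SimpleGraph V)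
    (M H H' : Set (Sym2 V)) (hmax : MaxIntersecting G M H H') :
    ∀ (u v : V) (p : G.Walk u v), IsMaxAltPath G M H p →
      ∀ e : Sym2 V, (p.edges.head? = some e ∨ p.edges.getLast? = some e) →
        ∃ (a b : V) (q : G.Walk a b), IsMaxAltPath G H H' q ∧ Even q.length ∧
          (q.edges.head? = some e ∨ q.edges.getLast? = some e) := by
  intro u v p hp e he
  obtain ⟨a, b, q, hq, heven, hqe⟩ := he.elim (hmax.exists_even_isMaxAltPath_of_head hp)
    fun he => hmax.exists_even_isMaxAltPath_of_head hp.reverse (by simpa using he)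
  exact ⟨a, b, q, hq, heven, Or.inl hqe⟩

/-- For maximally intersecting matchings `M`, `H`, `H'` of a finite connected
graph `G`, every end-edge of a maximal `M`-`H` alternating path is an end-edge of a maximal
`H`-`H'` alternating path with an even number of edges. -/
theorem stmt_14 [Fintype V] (G : SimpleGraph V) (hconn : G.Connected)
    (M H H' : Set (Sym2 V)) (hmax : MaxIntersecting G M H H') :
    ∀ (u v : V) (p : G.Walk u v), IsMaxAltPath G M H p →
      ∀ e : Sym2 V, (p.edges.head? = some e ∨ p.edges.getLast? = some e) →
        ∃ (a b : V) (q : G.Walk a b), IsMaxAltPath G H H' q ∧ Even q.length ∧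
          (q.edges.head? = some e ∨ q.edges.getLast? = some e) :=
  stmt_14_general G M H H' hmax
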